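/- Let K̃^k_s = Σ_{i,j} |G^s(i,j,k)⟩⟨G^s(i,j,k)| be the rank-4 projectors on (ℂ²)^{⊗3} and T̃^k_s = I ⊗ I ⊗ |(k⊕s)_⊢⟩⟨(k⊕s)_⊢|. Then c̃ = max_{k,k'} ‖√(K̃^{k'}_s) √(T̃^k_s)‖_∞² = 1/2. -/

import Mathlib

open Matrix
open scoped BigOperators ComplexOrder

noncomputable section

open Classical in

/-- Square root of a positive semidefinite matrix (junk value `0` otherwise). -/
noncomputable def matSqrt {n : Type*} [Fintype n] [DecidableEq n] (A : Matrix n n ℂ) :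
    Matrix n n ℂ :=
  if h : A.PosSemidef then
    (h.1.eigenvectorUnitary : Matrix n n ℂ) *
      diagonal ((↑) ∘ (Real.sqrt ·) ∘ h.1.eigenvalues) *
      (star h.1.eigenvectorUnitary : Matrix n n ℂ)
  else 0

/-- The operator (spectral) norm `‖·‖_∞` of a matrix. -/
noncomputable def specNorm {n : Type*} [Fintype n] [DecidableEq n] (A : Matrix n n ℂ) : ℝ :=
  ‖Matrix.toEuclideanCLM (𝕜 := ℂ) A‖

/-- `|G^s(i,j,k)⟩ = (1/√2) Σ_l (−1)^{l·(j⊕s)} |l, i⊕l, k⊕l⟩`. -/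
def GsFun (s i j k : Fin 2) : Fin 2 × Fin 2 × Fin 2 → ℂ := fun p =>
  ∑ l : Fin 2, ((1 / (Real.sqrt 2 : ℂ)) * (-1 : ℂ) ^ ((l : ℕ) * ((j + s : Fin 2) : ℕ))) *
    (if p = (l, i + l, k + l) then 1 else 0)

/-- The rank-4 projector `K̃^k_s = Σ_{i,j} |G^s(i,j,k)⟩⟨G^s(i,j,k)|`. -/
noncomputable def Ktil (s k : Fin 2) : Matrix (Fin 2 × Fin 2 × Fin 2) (Fin 2 × Fin 2 × Fin 2) ℂ :=
  Matrix.of fun p q => ∑ i : Fin 2, ∑ j : Fin 2, GsFun s i j k p * star (GsFun s i j k q)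

/-- The test projector `T̃^k_s = I ⊗ I ⊗ |(k⊕s)_⊢⟩⟨(k⊕s)_⊢|`. -/
noncomputable def Ttil (s k : Fin 2) : Matrix (Fin 2 × Fin 2 × Fin 2) (Fin 2 × Fin 2 × Fin 2) ℂ :=
  Matrix.of fun p q =>
    (if p.1 = q.1 then 1 else 0) * (if p.2.1 = q.2.1 then 1 else 0) *
      ((1 / 2 : ℂ) * (-1 : ℂ) ^ (((p.2.2 : ℕ) + (q.2.2 : ℕ)) * ((k + s : Fin 2) : ℕ)))

/-!
Both operators are orthogonal projections: `Ktil s k` is the diagonal projection onto the basis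
states `|a, b, c⟩` with `c = k + a`, and `Ttil s k` projects the last qubit onto a Hadamard vector.
The square root of a projection is the projection itself, and for projections `P`, `Q` the
C⋆-identity gives `‖P Q‖² = ‖(P Q)⋆ (P Q)‖ = ‖Q P Q‖`. A Hadamard vector has overlap `1/2` with
every computational basis state, so `T K T = T / 2` and every pair `(k, k')` gives exactly `1/2`.
-/

theorem IsStarProjection.norm_eq_one {E : Type*} [NonUnitalNormedRing E] [StarRing E]
    [CStarRing E] {e : E} (he : IsStarProjection e) (he0 : e ≠ 0) : ‖e‖ = 1 := by
  have h : ‖e‖ * ‖e‖ = ‖e‖ := by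
    rw [← CStarRing.norm_star_mul_self, he.isSelfAdjoint.star_eq, he.isIdempotentElem.eq]
  exact mul_left_cancel₀ (norm_ne_zero_iff.mpr he0) (h.trans (mul_one _).symm)

theorem IsStarProjection.norm_mul_sq {E : Type*} [NonUnitalNormedRing E] [StarRing E]
    [CStarRing E] {p q : E} (hp : IsStarProjection p) (hq : IsStarProjection q) :
    ‖p * q‖ ^ 2 = ‖q * p * q‖ := by
  rw [sq, ← CStarRing.norm_star_mul_self, star_mul, hp.isSelfAdjoint.star_eq,
    hq.isSelfAdjoint.star_eq, mul_assoc, ← mul_assoc p, hp.isIdempotentElem.eq, mul_assoc]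

section MatrixProjection

variable {n : Type*} [Fintype n]

theorem IsStarProjection.posSemidef {𝕜 : Type*} [RCLike 𝕜] {P : Matrix n n 𝕜}
    (hP : IsStarProjection P) : P.PosSemidef := by
  have h : Pᴴ * P = P := by
    rw [← star_eq_conjTranspose, hP.isSelfAdjoint.star_eq, hP.isIdempotentElem.eq]
  exact h ▸ posSemidef_conjTranspose_mul_self P

theorem Matrix.isStarProjection_diagonal {R : Type*} [DecidableEq n] [Semiring R] [StarRing R]
    {d : n → R} (hd : ∀ i, IsStarProjection (d i)) : IsStarProjection (diagonal d) where
  isIdempotentElem := by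
    rw [IsIdempotentElem, diagonal_mul_diagonal]
    exact congrArg diagonal (funext fun i => (hd i).isIdempotentElem.eq)
  isSelfAdjoint := by
    rw [IsSelfAdjoint, star_eq_conjTranspose, diagonal_conjTranspose]
    exact congrArg diagonal (funext fun i => (hd i).isSelfAdjoint.star_eq)

variable [DecidableEq n]

theorem matSqrt_eq_cfc {A : Matrix n n ℂ} (hA : A.PosSemidef) : matSqrt A = cfc Real.sqrt A := by
  rw [matSqrt, dif_pos hA, hA.1.cfc_eq, IsHermitian.cfc, Unitary.conjStarAlgAut_apply]
  rfl

theorem matSqrt_of_isStarProjection {P : Matrix n n ℂ} (hP : IsStarProjection P) :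
    matSqrt P = P := by
  rw [matSqrt_eq_cfc hP.posSemidef]
  conv_rhs => rw [← cfc_id' ℝ P]
  refine cfc_congr fun x hx => ?_
  rcases hP.isIdempotentElem.spectrum_subset ℝ hx with rfl | rfl <;> simp

theorem specNorm_matSqrt_mul_sq {P Q : Matrix n n ℂ} (hP : IsStarProjection P)
    (hQ : IsStarProjection Q) (hQ0 : Q ≠ 0) {c : ℂ} (hQPQ : Q * P * Q = c • Q) :
    specNorm (matSqrt P * matSqrt Q) ^ 2 = ‖c‖ := by
  have hP' := hP.map (toEuclideanCLM (n := n) (𝕜 := ℂ))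
  have hQ' := hQ.map (toEuclideanCLM (n := n) (𝕜 := ℂ))
  rw [matSqrt_of_isStarProjection hP, matSqrt_of_isStarProjection hQ, specNorm, map_mul,
    hP'.norm_mul_sq hQ', ← map_mul, ← map_mul, hQPQ, map_smul, norm_smul, hQ'.norm_eq_one,
    mul_one]
  simpa using hQ0

end MatrixProjection

theorem sum_neg_one_pow_mul_neg_one_pow_fin_two (a b s : Fin 2) :
    ∑ j : Fin 2, (-1 : ℝ) ^ ((a : ℕ) * ((j + s : Fin 2) : ℕ)) *
      (-1) ^ ((b : ℕ) * ((j + s : Fin 2) : ℕ)) = if a = b then 2 else 0 := by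
  refine (Equiv.sum_comp (Equiv.addRight s)
    (fun j : Fin 2 => (-1 : ℝ) ^ ((a : ℕ) * (j : ℕ)) * (-1) ^ ((b : ℕ) * (j : ℕ)))).trans ?_
  fin_cases a <;> fin_cases b <;> norm_num [Fin.sum_univ_two]

theorem neg_one_pow_add_mul_mul_neg_one_pow_add_mul {R : Type*} [Monoid R] [HasDistribNeg R]
    (m n x t : ℕ) : (-1 : R) ^ ((m + x) * t) * (-1) ^ ((x + n) * t) = (-1) ^ ((m + n) * t) := by
  rw [← pow_add, show (m + x) * t + (x + n) * t = (m + n) * t + 2 * (x * t) by ring, pow_add,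
    pow_mul (-1 : R) 2, neg_one_sq, one_pow, mul_one]

theorem GsFun_apply (s i j k : Fin 2) (p : Fin 2 × Fin 2 × Fin 2) :
    GsFun s i j k p = if p.2 = (i + p.1, k + p.1) then
      (((-1 : ℝ) ^ ((p.1 : ℕ) * ((j + s : Fin 2) : ℕ)) / √2 : ℝ) : ℂ) else 0 := by
  obtain ⟨a, b, c⟩ := p
  simp only [GsFun, Prod.mk.injEq, mul_ite, mul_one, mul_zero]
  rw [Finset.sum_eq_single a (fun l _ hl => by simp [Ne.symm hl]) (by simp)]
  simp [div_eq_inv_mul]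

theorem Ktil_eq_diagonal (s k : Fin 2) :
    Ktil s k = diagonal fun p => if p.2.2 = k + p.1 then 1 else 0 := by
  ext p q
  -- summing over `j` is orthogonality of the characters of `Fin 2`; it forces `p.1 = q.1`
  have hj : ∀ i, ∑ j, GsFun s i j k p * star (GsFun s i j k q) =
      if (p.2 = (i + p.1, k + p.1) ∧ q.2 = (i + q.1, k + q.1)) ∧ p.1 = q.1 then 1 else 0 := by
    intro i
    simp only [GsFun_apply, apply_ite star, star_zero, Complex.star_def, Complex.conj_ofReal,
      ite_zero_mul_ite_zero, ← Complex.ofReal_mul, Finset.sum_ite_irrel, Finset.sum_const_zero,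
      ← Complex.ofReal_sum, div_mul_div_comm, ← Finset.sum_div,
      sum_neg_one_pow_mul_neg_one_pow_fin_two, Real.mul_self_sqrt zero_le_two, ite_and]
    split_ifs <;> simp
  simp only [Ktil, of_apply, hj]
  rw [Finset.sum_ite_zero _ _ fun i _ i' _ hi hi' =>
    add_right_cancel (congrArg Prod.fst (hi.1.1.symm.trans hi'.1.1))]
  obtain ⟨a, b, c⟩ := p
  obtain ⟨a', b', c'⟩ := q
  simp only [Finset.mem_univ, true_and, diagonal_apply, Prod.mk.injEq, ← ite_and]
  refine if_congr ⟨?_, ?_⟩ rfl rfl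
  · rintro ⟨i, ⟨⟨rfl, rfl⟩, rfl, rfl⟩, rfl⟩
    exact ⟨⟨rfl, rfl, rfl⟩, rfl⟩
  · rintro ⟨⟨rfl, rfl, rfl⟩, rfl⟩
    exact ⟨b - a, ⟨⟨(sub_add_cancel b a).symm, rfl⟩, (sub_add_cancel b a).symm, rfl⟩, rfl⟩

theorem isStarProjection_Ktil (s k : Fin 2) : IsStarProjection (Ktil s k) := by
  rw [Ktil_eq_diagonal]
  refine isStarProjection_diagonal fun p => ?_
  split
  exacts [.one ℂ, .zero ℂ]

theorem Ttil_mul_diagonal_mul_Ttil (s k : Fin 2) {f : Fin 2 × Fin 2 × Fin 2 → ℂ} {μ : ℂ}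
    (hf : ∀ a b, ∑ c, f (a, b, c) = μ) :
    Ttil s k * diagonal f * Ttil s k = (μ / 2) • Ttil s k := by
  ext ⟨a, b, c⟩ ⟨a', b', c'⟩
  rw [Matrix.mul_assoc, mul_apply]
  simp only [diagonal_mul, Ttil, of_apply, Fintype.sum_prod_type, Matrix.smul_apply, smul_eq_mul,
    ite_mul, mul_ite, one_mul, zero_mul, mul_zero, Finset.sum_ite_irrel, Finset.sum_const_zero,
    Finset.sum_ite_eq', Finset.mem_univ, if_true]
  refine if_congr Iff.rfl (if_congr Iff.rfl ?_ rfl) rfl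
  set t : ℕ := ((k + s : Fin 2) : ℕ)
  calc ∑ x : Fin 2, 1 / 2 * (-1 : ℂ) ^ (((c : ℕ) + x) * t) *
        (f (a', b', x) * (1 / 2 * (-1) ^ ((x + (c' : ℕ)) * t)))
      = ∑ x, f (a', b', x) * (1 / 4 * (-1) ^ (((c : ℕ) + c') * t)) :=
        Finset.sum_congr rfl fun x _ => by
          rw [← neg_one_pow_add_mul_mul_neg_one_pow_add_mul c c' x t]; ring
    _ = μ / 2 * (1 / 2 * (-1) ^ (((c : ℕ) + c') * t)) := by rw [← Finset.sum_mul, hf]; ring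

theorem isStarProjection_Ttil (s k : Fin 2) : IsStarProjection (Ttil s k) where
  isIdempotentElem := by
    have h := Ttil_mul_diagonal_mul_Ttil s k (f := fun _ => 1) (μ := 2) fun _ _ => by simp
    rwa [diagonal_one, Matrix.mul_one, div_self two_ne_zero, one_smul] at h
  isSelfAdjoint := by
    rw [IsSelfAdjoint, star_eq_conjTranspose]
    ext p q
    simp [Ttil, eq_comm, add_comm, apply_ite (starRingEnd ℂ), map_ofNat]

theorem Ttil_ne_zero (s k : Fin 2) : Ttil s k ≠ 0 := fun h => by
  simpa [Ttil] using congrFun₂ h (0, 0, 0) (0, 0, 0)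

theorem Ttil_mul_Ktil_mul_Ttil (s k k' : Fin 2) :
    Ttil s k * Ktil s k' * Ttil s k = (1 / 2 : ℂ) • Ttil s k := by
  rw [Ktil_eq_diagonal]
  exact Ttil_mul_diagonal_mul_Ttil s k fun a b => by simp

/-- The overlap `c̃ = max ‖√(K̃^{k'}_s) √(T̃^k_s)‖_∞²` equals `1/2`. -/
theorem stmt17 (s : Fin 2) :
    IsGreatest
      {c : ℝ | ∃ k k' : Fin 2,
        c = (specNorm (matSqrt (Ktil s k') * matSqrt (Ttil s k))) ^ 2}
      (1 / 2) := by
  have hval : ∀ k k' : Fin 2, specNorm (matSqrt (Ktil s k') * matSqrt (Ttil s k)) ^ 2 = 1 / 2 :=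
    fun k k' => by
      rw [specNorm_matSqrt_mul_sq (isStarProjection_Ktil s k') (isStarProjection_Ttil s k)
        (Ttil_ne_zero s k) (Ttil_mul_Ktil_mul_Ttil s k k')]
      norm_num
  refine ⟨⟨0, 0, (hval 0 0).symm⟩, ?_⟩
  rintro c ⟨k, k', rfl⟩
  exact (hval k k').le
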